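/- Let H : ℝ^N → ℝ^N be continuous, Π : ℝ^N → ℝ differentiable, and Φ : ℝ → ℝ locally Lipschitz with ∇Π(f) · H(f) = Φ(Π(f)) for every f ∈ ℝ^N. If f¹, f² : [0, T] → ℝ^N are differentiable solutions of f' = H(f) with Π(f¹(0)) = Π(f²(0)), then Π(f¹(t)) = Π(f²(t)) for all t ∈ [0, T]; that is, the coarse response is uniquely determined by the coarse initial value even when the underlying fine initial conditions differ. -/

import Mathlib

/-!
Along a fine trajectory, the chain rule and the PDE `(∂Π/∂f)·H = Φ(Π)` turn the coarse variable
`c = Π ∘ f` into a solution of the scalar ODE `c' = Φ(c)`. A locally Lipschitz `Φ` is Lipschitz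
on the compact set swept out by two such coarse trajectories over `[0, T]`, so Grönwall-type
uniqueness applies to them.
-/

open Set

theorem ODE_solution_unique_of_locallyLipschitz_of_mem_Icc_right
    {E : Type*} [NormedAddCommGroup E] [NormedSpace ℝ E]
    {Φ : E → E} (hΦ : LocallyLipschitz Φ) {c₁ c₂ : ℝ → E} {a b : ℝ}
    (hc₁ : ∀ t ∈ Icc a b, HasDerivAt c₁ (Φ (c₁ t)) t)
    (hc₂ : ∀ t ∈ Icc a b, HasDerivAt c₂ (Φ (c₂ t)) t)
    (ha : c₁ a = c₂ a) :
    EqOn c₁ c₂ (Icc a b) := by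
  have hcont₁ : ContinuousOn c₁ (Icc a b) := fun t ht ↦ (hc₁ t ht).continuousAt.continuousWithinAt
  have hcont₂ : ContinuousOn c₂ (Icc a b) := fun t ht ↦ (hc₂ t ht).continuousAt.continuousWithinAt
  set K := c₁ '' Icc a b ∪ c₂ '' Icc a b
  have hK : IsCompact K :=
    (isCompact_Icc.image_of_continuousOn hcont₁).union (isCompact_Icc.image_of_continuousOn hcont₂)
  obtain ⟨C, hC⟩ := hΦ.locallyLipschitzOn.exists_lipschitzOnWith_of_compact hK
  exact ODE_solution_unique_of_mem_Icc_right (v := fun _ ↦ Φ) (s := fun _ ↦ K)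
    (fun _ _ ↦ hC)
    hcont₁ (fun t ht ↦ (hc₁ t (Ico_subset_Icc_self ht)).hasDerivWithinAt)
    (fun t ht ↦ .inl (mem_image_of_mem c₁ (Ico_subset_Icc_self ht)))
    hcont₂ (fun t ht ↦ (hc₂ t (Ico_subset_Icc_self ht)).hasDerivWithinAt)
    (fun t ht ↦ .inr (mem_image_of_mem c₂ (Ico_subset_Icc_self ht)))
    ha

theorem coarse_response_determined_by_coarse_initial_value_general
    {N : ℕ}
    (H : (Fin N → ℝ) → (Fin N → ℝ))
    (Piv : (Fin N → ℝ) → ℝ) (hPiv : Differentiable ℝ Piv)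
    (Φ : ℝ → ℝ) (hΦ : LocallyLipschitz Φ)
    (hPDE : ∀ f : Fin N → ℝ, fderiv ℝ Piv f (H f) = Φ (Piv f))
    (T : ℝ)
    (f₁ f₂ : ℝ → Fin N → ℝ)
    (hf₁ : ∀ t ∈ Set.Icc (0 : ℝ) T, HasDerivAt f₁ (H (f₁ t)) t)
    (hf₂ : ∀ t ∈ Set.Icc (0 : ℝ) T, HasDerivAt f₂ (H (f₂ t)) t)
    (h0 : Piv (f₁ 0) = Piv (f₂ 0)) :
    ∀ t ∈ Set.Icc (0 : ℝ) T, Piv (f₁ t) = Piv (f₂ t) := by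
  have coarse_ode : ∀ f : ℝ → Fin N → ℝ, (∀ t ∈ Icc (0 : ℝ) T, HasDerivAt f (H (f t)) t) →
      ∀ t ∈ Icc (0 : ℝ) T, HasDerivAt (Piv ∘ f) (Φ ((Piv ∘ f) t)) t :=
    fun f hf t ht ↦ hPDE (f t) ▸ (hPiv (f t)).hasFDerivAt.comp_hasDerivAt t (hf t ht)
  exact fun t ht ↦ ODE_solution_unique_of_locallyLipschitz_of_mem_Icc_right hΦ
    (coarse_ode f₁ hf₁) (coarse_ode f₂ hf₂) h0 ht

/-- If `Π` solves `∇Π · H = Φ(Π)` with `Φ` locally Lipschitz, then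
any two solutions of `f' = H(f)` on `[0,T]` whose coarse initial values agree have
identical coarse trajectories: the coarse response is uniquely determined by the
coarse initial value. -/
theorem coarse_response_determined_by_coarse_initial_value
    {N : ℕ}
    (H : (Fin N → ℝ) → (Fin N → ℝ)) (hH : Continuous H)
    (Piv : (Fin N → ℝ) → ℝ) (hPiv : Differentiable ℝ Piv)
    (Φ : ℝ → ℝ) (hΦ : LocallyLipschitz Φ)
    (hPDE : ∀ f : Fin N → ℝ, fderiv ℝ Piv f (H f) = Φ (Piv f))
    (T : ℝ) (hT : 0 < T)
    (f₁ f₂ : ℝ → Fin N → ℝ)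
    (hf₁ : ∀ t ∈ Set.Icc (0 : ℝ) T, HasDerivAt f₁ (H (f₁ t)) t)
    (hf₂ : ∀ t ∈ Set.Icc (0 : ℝ) T, HasDerivAt f₂ (H (f₂ t)) t)
    (h0 : Piv (f₁ 0) = Piv (f₂ 0)) :
    ∀ t ∈ Set.Icc (0 : ℝ) T, Piv (f₁ t) = Piv (f₂ t) :=
  coarse_response_determined_by_coarse_initial_value_general H Piv hPiv Φ hΦ hPDE T f₁ f₂ hf₁ hf₂ h0
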